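/- lim_{n→∞} S_{A₀^{(n)}} = 1 (Theorem 1, part 1, first limit). Here 0 < p < 1 since abcd ≠ 0. -/

import Mathlib

open Matrix Filter
open scoped BigOperators Classical

noncomputable section

/-- Index in `Fin 2` of a direction: `false` ↔ `-1` (index `0`), `true` ↔ `1` (index `1`). -/
def bidx (b : Bool) : Fin 2 := if b then 1 else 0

/-- The standard basis vector `e_j`, `j ∈ {-1,1}`, of `ℂ²`. -/
def eVec (b : Bool) : Fin 2 → ℂ := fun i => if i = bidx b then 1 else 0

/-- The projection `e_j e_j†`. -/
def projC (b : Bool) : Matrix (Fin 2) (Fin 2) ℂ :=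
  Matrix.single (bidx b) (bidx b) 1

/-- `P_j = e_j e_j† U`. -/
def pMat (U : Matrix (Fin 2) (Fin 2) ℂ) (b : Bool) : Matrix (Fin 2) (Fin 2) ℂ :=
  projC b * U

/-- The weight of a path `ξ = (ξ_n, …, ξ_1)` (here `ξ i` is step `i+1`):
`w(ξ) = P_{ξ_n} ⋯ P_{ξ_1} φ₀`. -/
def weight (U : Matrix (Fin 2) (Fin 2) ℂ) (φ₀ : Fin 2 → ℂ) {n : ℕ} (ξ : Fin n → Bool) :
    Fin 2 → ℂ :=
  ((List.ofFn fun i => pMat U (ξ i)).reverse.prod).mulVec φ₀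

/-- The complex inner product `⟨v, w⟩`, conjugate-linear in the first slot. -/
def cdot (v w : Fin 2 → ℂ) : ℂ := ∑ i, (starRingEnd ℂ) (v i) * w i

/-- The decoherence matrix restricted to a set `A` of pairs of paths. -/
def decMat (U : Matrix (Fin 2) (Fin 2) ℂ) (φ₀ : Fin 2 → ℂ) {n : ℕ}
    (A : Set ((Fin n → Bool) × (Fin n → Bool))) :
    Matrix (Fin n → Bool) (Fin n → Bool) ℂ :=
  Matrix.of fun ξ η =>
    if (ξ, η) ∈ A then cdot (weight U φ₀ ξ) (weight U φ₀ η) else 0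

/-- `ξ_1 + ⋯ + ξ_n ∈ ℤ`, each step being `±1`. -/
def pathSum {n : ℕ} (ξ : Fin n → Bool) : ℤ := ∑ i, (if ξ i then 1 else -1)

/-- `A₀^{(n)}`: pairs of paths with the same final direction (paths have length `n+1`). -/
def A0 (n : ℕ) : Set ((Fin (n+1) → Bool) × (Fin (n+1) → Bool)) :=
  {x | x.1 (Fin.last n) = x.2 (Fin.last n)}

/-- `A_P^{(n)}`: pairs of paths with the same final direction and the same endpoint. -/
def AP (n : ℕ) : Set ((Fin (n+1) → Bool) × (Fin (n+1) → Bool)) :=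
  {x | x.1 (Fin.last n) = x.2 (Fin.last n) ∧ pathSum x.1 = pathSum x.2}

/-- `A₁^{(n)}`: the diagonal pairs. -/
def A1 (n : ℕ) : Set ((Fin (n+1) → Bool) × (Fin (n+1) → Bool)) :=
  {x | x.1 = x.2}

/-- The von Neumann entropy `S(D) = −Σᵢ λᵢ log₂ λᵢ`, summing over the eigenvalues with
multiplicity (the roots of the characteristic polynomial; they are real for a PSD Hermitian
matrix), with the convention `0 · log₂ 0 = 0`. -/
def vnEntropy {I : Type*} [Fintype I] [DecidableEq I] (D : Matrix I I ℂ) : ℝ :=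
  -((D.charpoly.roots).map fun lam => lam.re * Real.logb 2 lam.re).sum

/-- The real projection `e_j e_j†`. -/
def projR (b : Bool) : Matrix (Fin 2) (Fin 2) ℝ :=
  Matrix.single (bidx b) (bidx b) 1

/-- The stochastic matrix `M = [[p, q], [q, p]]` of the correlated random walk, `q = 1 − p`. -/
def rwM (p : ℝ) : Matrix (Fin 2) (Fin 2) ℝ := !![p, 1-p; 1-p, p]

/-- The initial vector `φ = (q₀, p₀)ᵀ` of the correlated random walk, `q₀ = 1 − p₀`. -/
def rwφ (p₀ : ℝ) : Fin 2 → ℝ := ![1 - p₀, p₀]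

/-- `P̃_{ξ_n} ⋯ P̃_{ξ_2} φ_{ξ_1}`, where `P̃_j = e_j e_j† M` and `φ_j = e_j e_j† φ`. -/
def rwVec (p p₀ : ℝ) : {n : ℕ} → (Fin n → Bool) → (Fin 2 → ℝ)
  | 0, _ => rwφ p₀
  | n + 1, ξ =>
      ((List.ofFn fun i : Fin n => projR (ξ i.succ) * rwM p).reverse.prod).mulVec
        ((projR (ξ 0)).mulVec (rwφ p₀))

/-- `p_L^{(n)}(j)`: the probability that the `(p₀,p)`-correlated random walk is at `j`
at time `n`, having arrived from the left. -/
def pL (p p₀ : ℝ) (n : ℕ) (j : ℤ) : ℝ :=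
  ∑ ξ ∈ Finset.univ.filter (fun ξ : Fin n → Bool => pathSum ξ = j), rwVec p p₀ ξ 0

/-- `p_R^{(n)}(j)`: the probability that the `(p₀,p)`-correlated random walk is at `j`
at time `n`, having arrived from the right. -/
def pR (p p₀ : ℝ) (n : ℕ) (j : ℤ) : ℝ :=
  ∑ ξ ∈ Finset.univ.filter (fun ξ : Fin n → Bool => pathSum ξ = j), rwVec p p₀ ξ 1


/-!
The weight of a path is supported on the coordinate of its last step, so paths with different
final directions have orthogonal weights and `D_{A₀}` is the full Gram matrix `CᴴC` of the
`2 × 2ⁿ⁺¹` matrix `C` whose columns are the weights. The nonzero spectrum of `CᴴC` is that of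
`CCᴴ = diag(t₋₁, t₁)`, where `t_j` is the total squared weight of the paths ending with step `j`.
These masses evolve by the doubly stochastic matrix `[[p, q], [q, p]]` of squared moduli of the
entries of `U`; since `|p - q| < 1` they tend to `(1/2, 1/2)`, so the entropy tends to the binary
entropy of `1/2`, which is one bit.
-/

open Polynomial in
lemma vnEntropy_mul_of_mul_eq_diagonal {m n : Type*} [Fintype m] [Fintype n] [DecidableEq m]
    [DecidableEq n] (A : Matrix n m ℂ) (B : Matrix m n ℂ) (d : m → ℝ)
    (hBA : B * A = diagonal fun i => (d i : ℂ)) (hcard : Fintype.card m ≤ Fintype.card n) :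
    vnEntropy (A * B) = -∑ i, d i * Real.logb 2 (d i) := by
  have hroots : (A * B).charpoly.roots
      = Multiset.replicate (Fintype.card n - Fintype.card m) 0
        + Finset.univ.val.map fun i => (d i : ℂ) := by
    rw [charpoly_mul_comm_of_le A B hcard, hBA, charpoly_diagonal,
      roots_mul ((monic_X_pow _).mul (monic_prod_of_monic _ _ fun i _ => monic_X_sub_C _)).ne_zero,
      roots_X_pow, Multiset.nsmul_singleton, Finset.prod_eq_multiset_prod]
    simpa [Multiset.map_map, Function.comp_def] using
      roots_multiset_prod_X_sub_C (Finset.univ.val.map fun i => (d i : ℂ))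
  rw [vnEntropy, hroots, Multiset.map_add, Multiset.sum_add, Multiset.map_replicate,
    Multiset.map_map]
  simp

section UnitaryGroup

variable {n : Type*} [Fintype n] [DecidableEq n] {U : Matrix n n ℂ}

lemma sum_normSq_apply_right (hU : U ∈ unitaryGroup n ℂ) (i : n) :
    ∑ j, Complex.normSq (U i j) = 1 := by
  have h := congrFun (congrFun (mem_unitaryGroup_iff.mp hU) i) i
  simp only [mul_apply, star_apply, one_apply_eq, RCLike.star_def, Complex.mul_conj] at h
  exact_mod_cast h

lemma sum_normSq_apply_left (hU : U ∈ unitaryGroup n ℂ) (j : n) :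
    ∑ i, Complex.normSq (U i j) = 1 := by
  have h := congrFun (congrFun (mem_unitaryGroup_iff'.mp hU) j) j
  simp only [mul_apply, star_apply, one_apply_eq, RCLike.star_def] at h
  have h' : ((∑ i, Complex.normSq (U i j) : ℝ) : ℂ) = 1 := by
    push_cast
    simpa only [Complex.normSq_eq_conj_mul_self] using h
  exact_mod_cast h'

lemma sum_normSq_mulVec_apply (hU : U ∈ unitaryGroup n ℂ) (v : n → ℂ) :
    ∑ i, Complex.normSq ((U *ᵥ v) i) = ∑ i, Complex.normSq (v i) := by
  have hdot : ∀ w : n → ℂ, star w ⬝ᵥ w = ((∑ i, Complex.normSq (w i) : ℝ) : ℂ) := by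
    intro w
    simp only [dotProduct, Pi.star_apply, RCLike.star_def, Complex.ofReal_sum,
      Complex.normSq_eq_conj_mul_self]
  have hnorm : star (U *ᵥ v) ⬝ᵥ (U *ᵥ v) = star v ⬝ᵥ v := by
    rw [star_mulVec, ← dotProduct_mulVec, mulVec_mulVec, ← star_eq_conjTranspose,
      mem_unitaryGroup_iff'.mp hU, one_mulVec]
  exact_mod_cast (hdot _).symm.trans (hnorm.trans (hdot v))

end UnitaryGroup

lemma normSq_apply_eq_rwM {U : Matrix (Fin 2) (Fin 2) ℂ} (hU : U ∈ unitaryGroup (Fin 2) ℂ)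
    (i j : Fin 2) : Complex.normSq (U i j) = rwM (Complex.normSq (U 0 0)) i j := by
  have r₀ := sum_normSq_apply_right hU 0
  have c₀ := sum_normSq_apply_left hU 0
  have c₁ := sum_normSq_apply_left hU 1
  simp only [Fin.sum_univ_two] at r₀ c₀ c₁
  fin_cases i <;> fin_cases j <;>
    simp only [Fin.zero_eta, Fin.mk_one, rwM, of_apply, cons_val', cons_val_zero, cons_val_one,
      cons_val_fin_one] <;>
    linarith

lemma rwM_mulVec_apply_zero_add_one (p : ℝ) (v : Fin 2 → ℝ) :
    (rwM p *ᵥ v) 0 + (rwM p *ᵥ v) 1 = v 0 + v 1 := by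
  simp only [rwM, mulVec, dotProduct, of_apply, cons_val', cons_val_zero, cons_val_one,
    cons_val_fin_one, Fin.sum_univ_two]
  ring

lemma rwM_mulVec_apply_zero_sub_one (p : ℝ) (v : Fin 2 → ℝ) :
    (rwM p *ᵥ v) 0 - (rwM p *ᵥ v) 1 = (2 * p - 1) * (v 0 - v 1) := by
  simp only [rwM, mulVec, dotProduct, of_apply, cons_val', cons_val_zero, cons_val_one,
    cons_val_fin_one, Fin.sum_univ_two]
  ring

lemma tendsto_apply_one_of_succ_eq_rwM_mulVec {p : ℝ} (hp₀ : 0 < p) (hp₁ : p < 1)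
    {t : ℕ → Fin 2 → ℝ} (ht : ∀ n, t (n + 1) = rwM p *ᵥ t n) :
    Tendsto (fun n => t n 1) atTop (nhds ((t 0 0 + t 0 1) / 2)) := by
  have hsum : ∀ n, t n 0 + t n 1 = t 0 0 + t 0 1 := by
    intro n
    induction n with
    | zero => rfl
    | succ n ih => rw [ht, rwM_mulVec_apply_zero_add_one, ih]
  have hdiff : ∀ n, t n 0 - t n 1 = (2 * p - 1) ^ n * (t 0 0 - t 0 1) := by
    intro n
    induction n with
    | zero => simp
    | succ n ih => rw [ht, rwM_mulVec_apply_zero_sub_one, ih]; ring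
  have hpow : Tendsto (fun n => (2 * p - 1) ^ n) atTop (nhds 0) :=
    tendsto_pow_atTop_nhds_zero_of_abs_lt_one (abs_lt.mpr ⟨by linarith, by linarith⟩)
  have hlim := ((hpow.mul_const (t 0 0 - t 0 1)).const_sub (t 0 0 + t 0 1)).div_const 2
  rw [zero_mul, sub_zero] at hlim
  refine hlim.congr fun n => ?_
  linarith [hsum n, hdiff n]

lemma neg_mul_logb_add_mul_logb_eq_binEntropy_div (x : ℝ) :
    -((1 - x) * Real.logb 2 (1 - x) + x * Real.logb 2 x) = Real.binEntropy x / Real.log 2 := by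
  simp only [Real.binEntropy, Real.logb, Real.log_inv]
  ring

lemma bidx_injective : Function.Injective bidx := by decide

section PathWeights

variable (U : Matrix (Fin 2) (Fin 2) ℂ) (φ₀ : Fin 2 → ℂ)

lemma weight_zero (ξ : Fin 0 → Bool) : weight U φ₀ ξ = φ₀ := by
  simp [weight]

lemma weight_snoc {n : ℕ} (η : Fin n → Bool) (b : Bool) :
    weight U φ₀ (Fin.snoc η b : Fin (n + 1) → Bool) = pMat U b *ᵥ weight U φ₀ η := by
  simp only [weight, List.ofFn_succ', Fin.snoc_castSucc, Fin.snoc_last, List.concat_eq_append,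
    List.reverse_append, List.reverse_singleton, List.singleton_append, List.prod_cons]
  exact (mulVec_mulVec _ _ _).symm

lemma pMat_mulVec_apply (b : Bool) (v : Fin 2 → ℂ) (i : Fin 2) :
    (pMat U b *ᵥ v) i = if i = bidx b then (U *ᵥ v) i else 0 := by
  rw [pMat, ← mulVec_mulVec]
  rcases b with _ | _ <;> fin_cases i <;>
    simp [projC, bidx, mulVec, dotProduct, Fin.sum_univ_two, single_apply]

lemma weight_apply_of_ne {n : ℕ} (ξ : Fin (n + 1) → Bool) {i : Fin 2}
    (hi : i ≠ bidx (ξ (Fin.last n))) : weight U φ₀ ξ i = 0 := by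
  rw [← Fin.snoc_init_self ξ, weight_snoc, pMat_mulVec_apply, if_neg hi]

lemma cdot_weight_of_ne {n : ℕ} {ξ η : Fin (n + 1) → Bool}
    (h : ξ (Fin.last n) ≠ η (Fin.last n)) : cdot (weight U φ₀ ξ) (weight U φ₀ η) = 0 := by
  refine Finset.sum_eq_zero fun i _ => ?_
  by_cases hi : i = bidx (ξ (Fin.last n))
  · have hi' : i ≠ bidx (η (Fin.last n)) := hi ▸ fun h' => h (bidx_injective h')
    rw [weight_apply_of_ne U φ₀ η hi', mul_zero]
  · rw [weight_apply_of_ne U φ₀ ξ hi, map_zero, zero_mul]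

lemma sum_normSq_pMat_mulVec_apply (v : Fin 2 → ℂ) (i : Fin 2) :
    ∑ b, Complex.normSq ((pMat U b *ᵥ v) i) = Complex.normSq ((U *ᵥ v) i) := by
  simp only [pMat_mulVec_apply]
  fin_cases i <;> simp [bidx]

lemma normSq_mulVec_weight_apply {n : ℕ} (η : Fin (n + 1) → Bool) (i : Fin 2) :
    Complex.normSq ((U *ᵥ weight U φ₀ η) i)
      = ∑ j, Complex.normSq (U i j) * Complex.normSq (weight U φ₀ η j) := by
  have hk : ∀ j ≠ bidx (η (Fin.last n)), weight U φ₀ η j = 0 :=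
    fun j hj => weight_apply_of_ne U φ₀ η hj
  rw [mulVec, dotProduct,
    Finset.sum_eq_single _ (fun j _ hj => by rw [hk j hj, mul_zero]) (by simp),
    Finset.sum_eq_single _ (fun j _ hj => by rw [hk j hj, Complex.normSq_zero, mul_zero]) (by simp),
    Complex.normSq_mul]

def pathMatrix (n : ℕ) : Matrix (Fin 2) (Fin n → Bool) ℂ :=
  of fun i ξ => weight U φ₀ ξ i

def endMass (n : ℕ) (i : Fin 2) : ℝ :=
  ∑ ξ : Fin (n + 1) → Bool, Complex.normSq (weight U φ₀ ξ i)

lemma decMat_A0_eq_conjTranspose_mul (n : ℕ) :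
    decMat U φ₀ (A0 n) = (pathMatrix U φ₀ (n + 1))ᴴ * pathMatrix U φ₀ (n + 1) := by
  ext ξ η
  rw [decMat, of_apply]
  split_ifs with h
  · rfl
  · exact (cdot_weight_of_ne U φ₀ h).symm

lemma pathMatrix_mul_conjTranspose (n : ℕ) :
    pathMatrix U φ₀ (n + 1) * (pathMatrix U φ₀ (n + 1))ᴴ
      = diagonal fun i => (endMass U φ₀ n i : ℂ) := by
  ext i j
  simp only [mul_apply, conjTranspose_apply, pathMatrix, of_apply, diagonal_apply, endMass]
  split_ifs with h
  · subst h
    push_cast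
    exact Finset.sum_congr rfl fun ξ _ => Complex.mul_conj _
  · refine Finset.sum_eq_zero fun ξ _ => ?_
    by_cases hi : i = bidx (ξ (Fin.last n))
    · rw [weight_apply_of_ne U φ₀ ξ (hi ▸ Ne.symm h : j ≠ _), star_zero, mul_zero]
    · rw [weight_apply_of_ne U φ₀ ξ hi, zero_mul]

lemma vnEntropy_decMat_A0 (n : ℕ) :
    vnEntropy (decMat U φ₀ (A0 n))
      = -∑ i, endMass U φ₀ n i * Real.logb 2 (endMass U φ₀ n i) := by
  rw [decMat_A0_eq_conjTranspose_mul]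
  refine vnEntropy_mul_of_mul_eq_diagonal _ _ _ (pathMatrix_mul_conjTranspose U φ₀ n) ?_
  simpa using Nat.le_self_pow n.succ_ne_zero 2

lemma endMass_eq_sum_normSq_mulVec (n : ℕ) (i : Fin 2) :
    endMass U φ₀ n i = ∑ η : Fin n → Bool, Complex.normSq ((U *ᵥ weight U φ₀ η) i) := by
  rw [endMass, ← (Fin.snocEquiv fun _ => Bool).sum_comp, Fintype.sum_prod_type_right]
  exact Finset.sum_congr rfl fun η _ => by
    simp only [Fin.snocEquiv, Equiv.coe_fn_mk, weight_snoc, sum_normSq_pMat_mulVec_apply]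

lemma endMass_zero (i : Fin 2) : endMass U φ₀ 0 i = Complex.normSq ((U *ᵥ φ₀) i) := by
  simp [endMass_eq_sum_normSq_mulVec, weight_zero]

lemma endMass_succ (n : ℕ) (i : Fin 2) :
    endMass U φ₀ (n + 1) i = ∑ j, Complex.normSq (U i j) * endMass U φ₀ n j := by
  rw [endMass_eq_sum_normSq_mulVec]
  simp only [normSq_mulVec_weight_apply, endMass, Finset.mul_sum]
  exact Finset.sum_comm

end PathWeights

lemma endMass_succ_eq_rwM_mulVec {U : Matrix (Fin 2) (Fin 2) ℂ} (hU : U ∈ unitaryGroup (Fin 2) ℂ)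
    (φ₀ : Fin 2 → ℂ) (n : ℕ) :
    endMass U φ₀ (n + 1) = rwM (Complex.normSq (U 0 0)) *ᵥ endMass U φ₀ n := by
  ext i
  rw [endMass_succ, mulVec, dotProduct]
  exact Finset.sum_congr rfl fun j _ => by rw [normSq_apply_eq_rwM hU i j]

lemma endMass_zero_add_endMass_one {U : Matrix (Fin 2) (Fin 2) ℂ}
    (hU : U ∈ unitaryGroup (Fin 2) ℂ) (φ₀ : Fin 2 → ℂ) (n : ℕ) :
    endMass U φ₀ n 0 + endMass U φ₀ n 1 = ∑ i, Complex.normSq (φ₀ i) := by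
  induction n with
  | zero => rw [← sum_normSq_mulVec_apply hU, Fin.sum_univ_two, endMass_zero, endMass_zero]
  | succ n ih => rw [endMass_succ_eq_rwM_mulVec hU, rwM_mulVec_apply_zero_add_one, ih]

/-- `lim_{n→∞} S_{A₀^{(n)}} = 1` (Theorem 1, part 1, first limit). -/
theorem tendsto_vnEntropy_decMat_A0
    (a b c d α β : ℂ)
    (hU : !![a, b; c, d] ∈ Matrix.unitaryGroup (Fin 2) ℂ)
    (habcd : a * b * c * d ≠ 0)
    (hφ : ‖α‖ ^ 2 + ‖β‖ ^ 2 = 1) :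
    Filter.Tendsto (fun n : ℕ => vnEntropy (decMat !![a, b; c, d] ![α, β] (A0 n)))
      Filter.atTop (nhds 1) := by
  set U : Matrix (Fin 2) (Fin 2) ℂ := !![a, b; c, d]
  set φ : Fin 2 → ℂ := ![α, β]
  have hφ₁ : ∑ i, Complex.normSq (φ i) = 1 := by
    simpa [φ, Fin.sum_univ_two, Complex.normSq_eq_norm_sq] using hφ
  have hp : 0 < Complex.normSq (U 0 0) ∧ Complex.normSq (U 0 0) < 1 := by
    have hab := left_ne_zero_of_mul (left_ne_zero_of_mul habcd)
    have ha := Complex.normSq_pos.mpr (left_ne_zero_of_mul hab)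
    have hb := Complex.normSq_pos.mpr (right_ne_zero_of_mul hab)
    have hrow := sum_normSq_apply_right hU 0
    simp only [U, Fin.sum_univ_two, of_apply, cons_val', cons_val_zero, cons_val_one,
      empty_val', cons_val_fin_one] at hrow ⊢
    constructor <;> linarith
  have hlim : Tendsto (fun n => endMass U φ n 1) atTop (nhds 2⁻¹) := by
    have := tendsto_apply_one_of_succ_eq_rwM_mulVec hp.1 hp.2 (endMass_succ_eq_rwM_mulVec hU φ)
    rwa [endMass_zero_add_endMass_one hU, hφ₁, one_div] at this
  have hS : ∀ n, vnEntropy (decMat U φ (A0 n))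
      = Real.binEntropy (endMass U φ n 1) / Real.log 2 := fun n => by
    rw [vnEntropy_decMat_A0, Fin.sum_univ_two, ← neg_mul_logb_add_mul_logb_eq_binEntropy_div,
      show endMass U φ n 0 = 1 - endMass U φ n 1 by linarith [endMass_zero_add_endMass_one hU φ n]]
  have hH := ((Real.binEntropy_continuous.tendsto 2⁻¹).comp hlim).div_const (Real.log 2)
  rw [Real.binEntropy_two_inv, div_self (Real.log_pos one_lt_two).ne'] at hH
  exact hH.congr fun n => (hS n).symm
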